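/- arXiv:1909.03328 — 6 statements merged into one kernel-verified Lean document; each statement's English description precedes it below -/
import Mathlib

section
/- Let u_i, u_j ∈ ℝ, let c ∈ ℝ^d, let f : ℝ → ℝ^d, and let d_{ij} > 0 be an artificial viscosity coefficient satisfying |c · (f(u_j) − f(u_i))| ≤ d_{ij} |u_j − u_i|, where · denotes the Euclidean dot product. Then the bar state ū_{ij} = (u_i + u_j)/2 − c · (f(u_j) − f(u_i)) / (2 d_{ij}) satisfies the local maximum principle min{u_i, u_j} ≤ ū_{ij} ≤ max{u_i, u_j}. In particular, the bar states of the low-order scheme with Rusanov-type artificial viscosity (which validates the hypothesis via the guaranteed maximum speed bound) stay in the interval spanned by the two nodal states. -/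
/-!
Since `|c · (f uⱼ - f uᵢ)| ≤ dᵢⱼ |uⱼ - uᵢ|`, the correction term subtracted from the midpoint
has absolute value at most half the length `|uⱼ - uᵢ|` of the interval spanned by `uᵢ` and `uⱼ`,
so the bar state cannot leave that interval.
-/

section LinearOrderedField

variable {K : Type*} [Field K] [LinearOrder K] [IsStrictOrderedRing K]

theorem abs_div_two_mul_le_half {x y D : K} (hD : 0 < D) (h : |x| ≤ D * |y|) :
    |x / (2 * D)| ≤ |y| / 2 := by
  rw [abs_div, abs_of_pos (by positivity : (0 : K) < 2 * D),
    div_le_div_iff₀ (by positivity) two_pos]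
  linarith

theorem midpoint_sub_mem_uIcc {a b δ : K} (h : |δ| ≤ |b - a| / 2) :
    (a + b) / 2 - δ ∈ Set.uIcc a b := by
  obtain ⟨hlo, hhi⟩ := abs_le.mp h
  rcases le_total a b with hab | hba
  · rw [abs_of_nonneg (sub_nonneg.mpr hab)] at hlo hhi
    exact Set.mem_uIcc_of_le (by linarith) (by linarith)
  · rw [abs_of_nonpos (sub_nonpos.mpr hba)] at hlo hhi
    exact Set.mem_uIcc_of_ge (by linarith) (by linarith)

end LinearOrderedField

/-- Local maximum principle for low-order bar states: under the Rusanov-type viscosity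
bound, the bar state lies between the two nodal states. -/
theorem bar_state_local_max_principle (d : ℕ) (c : EuclideanSpace ℝ (Fin d))
    (f : ℝ → EuclideanSpace ℝ (Fin d)) (ui uj dij : ℝ) (hd : 0 < dij)
    (hbound : |(inner ℝ c (f uj - f ui) : ℝ)| ≤ dij * |uj - ui|) :
    min ui uj ≤ (ui + uj) / 2 - (inner ℝ c (f uj - f ui) : ℝ) / (2 * dij) ∧
      (ui + uj) / 2 - (inner ℝ c (f uj - f ui) : ℝ) / (2 * dij) ≤ max ui uj :=
  midpoint_sub_mem_uIcc (abs_div_two_mul_le_half hd hbound)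
end

section
/- Consider the linear advection flux f(x,u) = v(x)u with nodal velocities v_i, v_j ∈ ℝ^d. Let c ∈ ℝ^d, u_i, u_j ∈ ℝ, and let d > 0 satisfy d ≥ c · v_j and d ≥ −(c · v_i), where · is the Euclidean dot product. Then the bar state ū = (u_i + u_j)/2 − c · (v_j u_j − v_i u_i)/(2d) admits the decomposition 2d·ū = (d − c·v_j) u_j + (d + c·v_i) u_i with both coefficients d − c·v_j ≥ 0 and d + c·v_i ≥ 0; consequently, if u_i ≥ 0 and u_j ≥ 0 then ū ≥ 0. In particular this holds for the discrete upwinding coefficient d = max{c·v_j, 0, −c·v_i} whenever that maximum is positive, so the corresponding low-order scheme is positivity preserving. -/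
section BarState

variable {E : Type*} [NormedAddCommGroup E] [InnerProductSpace ℝ E]

theorem inner_smul_sub_smul_right (c vi vj : E) (ui uj : ℝ) :
    inner ℝ c (uj • vj - ui • vi) = uj * inner ℝ c vj - ui * inner ℝ c vi := by
  rw [inner_sub_right, real_inner_smul_right, real_inner_smul_right]

theorem two_mul_bar_state_eq {c vi vj : E} {ui uj d : ℝ} (hd : d ≠ 0) :
    2 * d * ((ui + uj) / 2 - inner ℝ c (uj • vj - ui • vi) / (2 * d)) =
      (d - inner ℝ c vj) * uj + (d + inner ℝ c vi) * ui := by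
  rw [inner_smul_sub_smul_right]
  field_simp
  ring

theorem bar_state_nonneg {c vi vj : E} {ui uj d : ℝ} (hd : 0 < d)
    (hj : inner ℝ c vj ≤ d) (hi : -inner ℝ c vi ≤ d) (hui : 0 ≤ ui) (huj : 0 ≤ uj) :
    0 ≤ (ui + uj) / 2 - inner ℝ c (uj • vj - ui • vi) / (2 * d) := by
  have hcomb : 0 ≤ 2 * d * ((ui + uj) / 2 - inner ℝ c (uj • vj - ui • vi) / (2 * d)) := by
    rw [two_mul_bar_state_eq hd.ne']
    exact add_nonneg (mul_nonneg (sub_nonneg.2 hj) huj)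
      (mul_nonneg (neg_le_iff_add_nonneg.1 hi) hui)
  exact nonneg_of_mul_nonneg_right hcomb (by positivity)

end BarState

/-- Discrete upwinding for linear advection: the bar state is a nonnegative combination
of the two nodal states and positivity is preserved. -/
theorem upwind_bar_state_positivity (d : ℕ) (c vi vj : EuclideanSpace ℝ (Fin d))
    (ui uj dij : ℝ) (hd : 0 < dij)
    (hj : (inner ℝ c vj : ℝ) ≤ dij) (hi : -(inner ℝ c vi : ℝ) ≤ dij) :
    2 * dij * ((ui + uj) / 2 - (inner ℝ c (uj • vj - ui • vi) : ℝ) / (2 * dij)) =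
        (dij - (inner ℝ c vj : ℝ)) * uj + (dij + (inner ℝ c vi : ℝ)) * ui ∧
      0 ≤ dij - (inner ℝ c vj : ℝ) ∧ 0 ≤ dij + (inner ℝ c vi : ℝ) ∧
      (0 ≤ ui → 0 ≤ uj →
        0 ≤ (ui + uj) / 2 - (inner ℝ c (uj • vj - ui • vi) : ℝ) / (2 * dij)) :=
  ⟨two_mul_bar_state_eq hd.ne', sub_nonneg.2 hj, neg_le_iff_add_nonneg.1 hi,
    bar_state_nonneg hd hj hi⟩
end

section
/- Let S be a finite index set, let m > 0, let d_j ≥ 0 for j ∈ S, and let Δt ≥ 0 satisfy the CFL-like condition Δt ∑_{j∈S} 2 d_j ≤ m. Let a ≤ b be real numbers, and suppose u ∈ [a,b] and ū_j ∈ [a,b] for all j ∈ S. Then the forward Euler update u⁺ = u + (Δt/m) ∑_{j∈S} 2 d_j (ū_j − u) satisfies u⁺ ∈ [a,b]. (This proves that each forward Euler stage of the low-order scheme, written in terms of bar states, is invariant domain preserving under the CFL condition, since u⁺ is a convex combination of u and the bar states.) -/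
/-- Each forward Euler stage of the low-order scheme, written in terms of bar states,
is invariant domain preserving under the CFL-like condition. -/
theorem low_order_forward_euler_idp {ι : Type*} (S : Finset ι) (m : ℝ) (hm : 0 < m)
    (dcoef : ι → ℝ) (hd : ∀ j ∈ S, 0 ≤ dcoef j) (Δt : ℝ) (hΔt : 0 ≤ Δt)
    (hcfl : Δt * ∑ j ∈ S, 2 * dcoef j ≤ m)
    (a b : ℝ) (hab : a ≤ b) (u : ℝ) (hu : u ∈ Set.Icc a b)
    (ubar : ι → ℝ) (hubar : ∀ j ∈ S, ubar j ∈ Set.Icc a b) :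
    u + (Δt / m) * ∑ j ∈ S, 2 * dcoef j * (ubar j - u) ∈ Set.Icc a b := by
  obtain ⟨hua, hub⟩ := hu
  have hT : (0:ℝ) ≤ Δt / m := div_nonneg hΔt hm.le
  have hK : (0:ℝ) ≤ ∑ j ∈ S, 2 * dcoef j :=
    Finset.sum_nonneg fun j hj => by have := hd j hj; linarith
  have hTK : (Δt / m) * ∑ j ∈ S, 2 * dcoef j ≤ 1 := by
    rw [div_mul_eq_mul_div, div_le_one hm]; exact hcfl
  constructor
  · have h1 : ∑ j ∈ S, 2 * dcoef j * (a - u) ≤ ∑ j ∈ S, 2 * dcoef j * (ubar j - u) := by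
      apply Finset.sum_le_sum
      intro j hj
      have := hd j hj
      have := (hubar j hj).1
      nlinarith
    have h2 : (Δt / m) * ∑ j ∈ S, 2 * dcoef j * (a - u)
        ≤ (Δt / m) * ∑ j ∈ S, 2 * dcoef j * (ubar j - u) :=
      mul_le_mul_of_nonneg_left h1 hT
    have h3 : ∑ j ∈ S, 2 * dcoef j * (a - u) = (∑ j ∈ S, 2 * dcoef j) * (a - u) := by
      rw [Finset.sum_mul]
    rw [h3] at h2
    nlinarith
  · have h1 : ∑ j ∈ S, 2 * dcoef j * (ubar j - u) ≤ ∑ j ∈ S, 2 * dcoef j * (b - u) := by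
      apply Finset.sum_le_sum
      intro j hj
      have := hd j hj
      have := (hubar j hj).2
      nlinarith
    have h2 : (Δt / m) * ∑ j ∈ S, 2 * dcoef j * (ubar j - u)
        ≤ (Δt / m) * ∑ j ∈ S, 2 * dcoef j * (b - u) :=
      mul_le_mul_of_nonneg_left h1 hT
    have h3 : ∑ j ∈ S, 2 * dcoef j * (b - u) = (∑ j ∈ S, 2 * dcoef j) * (b - u) := by
      rw [Finset.sum_mul]
    rw [h3] at h2
    nlinarith
end

section
/- Let d > 0, let u_i^{min} ≤ u_i^{max} and u_j^{min} ≤ u_j^{max} be real bounds, and let w_{ij}, w_{ji} ∈ ℝ satisfy 2d·u_i^{min} ≤ w_{ij} ≤ 2d·u_i^{max} and 2d·u_j^{min} ≤ w_{ji} ≤ 2d·u_j^{max}. For a target flux f ∈ ℝ define the limited flux f* = min{ f, min{ 2d·u_i^{max} − w_{ij}, w_{ji} − 2d·u_j^{min} } } if f > 0, and f* = max{ f, max{ 2d·u_i^{min} − w_{ij}, w_{ji} − 2d·u_j^{max} } } otherwise. Then: (i) 2d·u_i^{min} ≤ w_{ij} + f* ≤ 2d·u_i^{max}; (ii) 2d·u_j^{min}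 ≤ w_{ji} − f* ≤ 2d·u_j^{max}; (iii) f·f* ≥ 0 and |f*| ≤ |f|. That is, the monolithic convex limiter produces flux-corrected bar states ū_{ij}* = ū_{ij} + f*/(2d) and ū_{ji}* = ū_{ji} − f*/(2d) that satisfy the same local discrete maximum principles as the low-order bar states, while never increasing the magnitude or flipping the sign of the target flux. -/
/-- The monolithic convex limiter: the limited flux keeps the flux-corrected bar states
within the local bounds and never increases the magnitude or flips the sign of the
target flux. -/
theorem monolithic_convex_limiter (dij uimin uimax ujmin ujmax wij wji f : ℝ)
    (hd : 0 < dij) (hi : uimin ≤ uimax) (hj : ujmin ≤ ujmax)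
    (hwij₁ : 2 * dij * uimin ≤ wij) (hwij₂ : wij ≤ 2 * dij * uimax)
    (hwji₁ : 2 * dij * ujmin ≤ wji) (hwji₂ : wji ≤ 2 * dij * ujmax)
    (fstar : ℝ)
    (hfstar : fstar =
      if 0 < f then
        min f (min (2 * dij * uimax - wij) (wji - 2 * dij * ujmin))
      else
        max f (max (2 * dij * uimin - wij) (wji - 2 * dij * ujmax))) :
    (2 * dij * uimin ≤ wij + fstar ∧ wij + fstar ≤ 2 * dij * uimax) ∧
      (2 * dij * ujmin ≤ wji - fstar ∧ wji - fstar ≤ 2 * dij * ujmax) ∧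
      0 ≤ f * fstar ∧ |fstar| ≤ |f| := by
  subst hfstar
  split_ifs with hf
  · have h0 : (0:ℝ) ≤ min f (min (2 * dij * uimax - wij) (wji - 2 * dij * ujmin)) := by
      apply le_min hf.le (le_min (by linarith) (by linarith))
    have h1 : min f (min (2 * dij * uimax - wij) (wji - 2 * dij * ujmin)) ≤ f := min_le_left _ _
    have h2 : min f (min (2 * dij * uimax - wij) (wji - 2 * dij * ujmin)) ≤
        2 * dij * uimax - wij := le_trans (min_le_right _ _) (min_le_left _ _)
    have h3 : min f (min (2 * dij * uimax - wij) (wji - 2 * dij * ujmin)) ≤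
        wji - 2 * dij * ujmin := le_trans (min_le_right _ _) (min_le_right _ _)
    refine ⟨⟨by linarith, by linarith⟩, ⟨by linarith, by linarith⟩, by positivity, ?_⟩
    rw [abs_of_nonneg h0, abs_of_pos hf]; exact h1
  · push_neg at hf
    have h0 : max f (max (2 * dij * uimin - wij) (wji - 2 * dij * ujmax)) ≤ 0 := by
      apply max_le hf (max_le (by linarith) (by linarith))
    have h1 : f ≤ max f (max (2 * dij * uimin - wij) (wji - 2 * dij * ujmax)) := le_max_left _ _
    have h2 : 2 * dij * uimin - wij ≤
        max f (max (2 * dij * uimin - wij) (wji - 2 * dij * ujmax)) :=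
      le_trans (le_max_left _ _) (le_max_right _ _)
    have h3 : wji - 2 * dij * ujmax ≤
        max f (max (2 * dij * uimin - wij) (wji - 2 * dij * ujmax)) :=
      le_trans (le_max_right _ _) (le_max_right _ _)
    refine ⟨⟨by linarith, by linarith⟩, ⟨by linarith, by linarith⟩,
      by nlinarith, ?_⟩
    rw [abs_of_nonpos h0, abs_of_nonpos hf]; linarith
end

section
/- Let d > 0, let u_i^{min} ≤ u_i^{max} and u_j^{min} ≤ u_j^{max} be real bounds, let w_{ij}, w_{ji} ∈ ℝ be arbitrary (the low-order bar states need not satisfy the bounds), and let f ∈ ℝ. Define the generalized limited flux f* = min{ f, max{0, min{ 2d·u_i^{max} − w_{ij}, w_{ji} − 2d·u_j^{min} }} } if f > 0, and f* = max{ f, min{0, max{ 2d·u_i^{min} − w_{ij}, w_{ji} − 2d·u_j^{max} }} } otherwise. Then: (i) min{w_{ij}, 2d·u_i^{min}} ≤ w_{ij} + f* ≤ max{w_{ij}, 2d·u_i^{max}}; (ii) min{w_{ji}, 2d·u_j^{min}} ≤ w_{ji} − f* ≤ max{w_{ji}, 2d·u_j^{max}}; (iii) f·f* ≥ 0 and |f*|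 ≤ |f|. In particular, every one of the four bound inequalities that holds for the low-order bar states also holds for the flux-corrected bar states, so the generalized limiter ensures positivity preservation for linear flux functions even when the low-order bar states fail to satisfy the two-sided local maximum principle. -/
/-- The generalized monolithic convex limiter with inner clamps: each of the four bound
inequalities that holds for the low-order bar states also holds for the flux-corrected
bar states, and the limiter never increases the magnitude or flips the sign of the
target flux. -/
theorem generalized_convex_limiter (dij uimin uimax ujmin ujmax wij wji f : ℝ)
    (hd : 0 < dij) (hi : uimin ≤ uimax) (hj : ujmin ≤ ujmax)
    (fstar : ℝ)
    (hfstar : fstar =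
      if 0 < f then
        min f (max 0 (min (2 * dij * uimax - wij) (wji - 2 * dij * ujmin)))
      else
        max f (min 0 (max (2 * dij * uimin - wij) (wji - 2 * dij * ujmax)))) :
    (min wij (2 * dij * uimin) ≤ wij + fstar ∧ wij + fstar ≤ max wij (2 * dij * uimax)) ∧
      (min wji (2 * dij * ujmin) ≤ wji - fstar ∧ wji - fstar ≤ max wji (2 * dij * ujmax)) ∧
      0 ≤ f * fstar ∧ |fstar| ≤ |f| := by
  subst hfstar
  split_ifs with hf
  · set A := 2 * dij * uimax - wij with hA
    set B := wji - 2 * dij * ujmin with hB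
    have h0 : 0 ≤ min f (max 0 (min A B)) := le_min hf.le (le_max_left _ _)
    have hle : min f (max 0 (min A B)) ≤ f := min_le_left _ _
    have hAle : min f (max 0 (min A B)) ≤ max 0 A :=
      (min_le_right _ _).trans (max_le_max le_rfl (min_le_left _ _))
    have hBle : min f (max 0 (min A B)) ≤ max 0 B :=
      (min_le_right _ _).trans (max_le_max le_rfl (min_le_right _ _))
    refine ⟨⟨(min_le_left _ _).trans (by linarith), ?_⟩,
      ⟨?_, le_trans (by linarith) (le_max_left _ _)⟩,
      mul_nonneg hf.le h0, ?_⟩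
    · rcases le_total A 0 with h|h
      · refine le_trans ?_ (le_max_left wij _)
        have := hAle.trans (max_le le_rfl h)
        linarith
      · refine le_trans ?_ (le_max_right wij _)
        have := hAle.trans (max_le h le_rfl)
        linarith
    · rcases le_total B 0 with h|h
      · refine le_trans (min_le_left wji _) ?_
        have := hBle.trans (max_le le_rfl h)
        linarith
      · refine le_trans (min_le_right wji _) ?_
        have := hBle.trans (max_le h le_rfl)
        linarith
    · rw [abs_of_nonneg h0, abs_of_nonneg hf.le]; exact hle
  · push_neg at hf
    set A := 2 * dij * uimin - wij with hA
    set B := wji - 2 * dij * ujmax with hB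
    have h0 : max f (min 0 (max A B)) ≤ 0 := max_le hf (min_le_left _ _)
    have hle : f ≤ max f (min 0 (max A B)) := le_max_left _ _
    have hAle : min 0 A ≤ max f (min 0 (max A B)) :=
      le_trans (min_le_min le_rfl (le_max_left _ _)) (le_max_right _ _)
    have hBle : min 0 B ≤ max f (min 0 (max A B)) :=
      le_trans (min_le_min le_rfl (le_max_right _ _)) (le_max_right _ _)
    refine ⟨⟨?_, le_trans (by linarith) (le_max_left _ _)⟩,
      ⟨(min_le_left _ _).trans (by linarith), ?_⟩,
      (by nlinarith [mul_nonneg (neg_nonneg.2 hf) (neg_nonneg.2 h0)] : 0 ≤ f * max f (min 0 (max A B))), ?_⟩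
    · rcases le_total 0 A with h|h
      · refine le_trans (min_le_left wij _) ?_
        have := (le_min le_rfl h).trans hAle
        linarith
      · refine le_trans (min_le_right wij _) ?_
        have := (le_min h le_rfl).trans hAle
        linarith
    · rcases le_total 0 B with h|h
      · refine le_trans ?_ (le_max_left wji _)
        have := (le_min le_rfl h).trans hBle
        linarith
      · refine le_trans ?_ (le_max_right wji _)
        have := (le_min h le_rfl).trans hBle
        linarith
    · rw [abs_of_nonpos h0, abs_of_nonpos hf]; linarith
end

section
/- Let S be a finite index set, let m > 0, d_j ≥ 0 for j ∈ S, and c ≥ 0, and let Δt ≥ 0 satisfy the CFL-like condition Δt (∑_{j∈S} 2 d_j + c) ≤ m. Let a ≤ b be real numbers, and suppose u ∈ [a,b], ū_j* ∈ [a,b] for all j ∈ S, and u* ∈ [a,b]. Then the flux-corrected forward Euler update u⁺ = u + (Δt/m) [ ∑_{j∈S} 2 d_j (ū_j* − u) + c (u* − u) ] satisfies u⁺ ∈ [a,b]. (This establishes the invariant domain preserving property of the monolithic flux-corrected scheme: since the limited bar states ū_{ij}* satisfy the local bounds and the limited boundary correction can be written as c_i(u_i* − u_i) with 0 ≤ c_i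 and u_i* ∈ {u_i^{min}, u_i^{max}}, each explicit stage produces values in [a,b] under the CFL condition.) -/
/-- Invariant domain preservation of the flux-corrected forward Euler stage: with
limited bar states and limited boundary correction in `[a,b]`, the update stays in
`[a,b]` under the CFL-like condition. -/
theorem flux_corrected_forward_euler_idp {ι : Type*} (S : Finset ι) (m : ℝ) (hm : 0 < m)
    (dcoef : ι → ℝ) (hd : ∀ j ∈ S, 0 ≤ dcoef j) (c : ℝ) (hc : 0 ≤ c)
    (Δt : ℝ) (hΔt : 0 ≤ Δt)
    (hcfl : Δt * ((∑ j ∈ S, 2 * dcoef j) + c) ≤ m)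
    (a b : ℝ) (hab : a ≤ b) (u : ℝ) (hu : u ∈ Set.Icc a b)
    (ubar : ι → ℝ) (hubar : ∀ j ∈ S, ubar j ∈ Set.Icc a b)
    (ustar : ℝ) (hustar : ustar ∈ Set.Icc a b) :
    u + (Δt / m) * ((∑ j ∈ S, 2 * dcoef j * (ubar j - u)) + c * (ustar - u)) ∈
      Set.Icc a b := by
  obtain ⟨hua, hub⟩ := hu
  obtain ⟨hsa, hsb⟩ := hustar
  set q : ℝ := Δt / m with hq
  have hq0 : 0 ≤ q := div_nonneg hΔt hm.le
  have hT0 : 0 ≤ (∑ j ∈ S, 2 * dcoef j) + c := by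
    have : 0 ≤ ∑ j ∈ S, 2 * dcoef j :=
      Finset.sum_nonneg fun j hj => by nlinarith [hd j hj]
    linarith
  have hqT : q * ((∑ j ∈ S, 2 * dcoef j) + c) ≤ 1 := by
    rw [hq, div_mul_eq_mul_div, div_le_one hm]
    exact hcfl
  -- rewrite the sum
  have key : (∑ j ∈ S, 2 * dcoef j * (ubar j - u))
      = (∑ j ∈ S, 2 * dcoef j * ubar j) - (∑ j ∈ S, 2 * dcoef j) * u := by
    rw [Finset.sum_mul, ← Finset.sum_sub_distrib]
    congr 1; ext j; ring
  constructor
  · have hlow : (∑ j ∈ S, 2 * dcoef j) * a ≤ ∑ j ∈ S, 2 * dcoef j * ubar j := by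
      rw [Finset.sum_mul]
      refine Finset.sum_le_sum fun j hj => ?_
      have := (hubar j hj).1
      nlinarith [hd j hj]
    rw [key]
    nlinarith [mul_le_mul_of_nonneg_left hlow hq0, mul_le_mul_of_nonneg_left hsa (mul_nonneg hq0 hc)]
  · have hhigh : (∑ j ∈ S, 2 * dcoef j * ubar j) ≤ (∑ j ∈ S, 2 * dcoef j) * b := by
      rw [Finset.sum_mul]
      refine Finset.sum_le_sum fun j hj => ?_
      have := (hubar j hj).2
      nlinarith [hd j hj]
    rw [key]
    nlinarith [mul_le_mul_of_nonneg_left hhigh hq0, mul_le_mul_of_nonneg_left hsb (mul_nonneg hq0 hc)]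
end
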